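/- arXiv:2604.10002 — 3 statements merged into one kernel-verified Lean document; each statement's English description precedes it below -/
import Mathlib

section
/- Let B be a strictly convex Banach space, C ⊆ B closed and convex, and T : C → C a quasi-nonexpansive map, i.e., T has at least one fixed point and ‖T(x) - p‖ ≤ ‖x - p‖ for every fixed point p of T and every x ∈ C. Then the set of fixed points of T is a nonempty closed convex subset of C. -/
open AffineMap Set

def QuasiNonexpansiveOn {X : Type*} [Dist X] (T : X → X) (C : Set X) : Prop :=
  ∀ p ∈ C, T p = p → ∀ x ∈ C, dist (T x) p ≤ dist x p

theorem QuasiNonexpansiveOn.isClosed_fixedPoints {X : Type*} [MetricSpace X] {T : X → X}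
    {C : Set X} (hT : QuasiNonexpansiveOn T C) (hC : IsClosed C) :
    IsClosed {p ∈ C | T p = p} := by
  refine isClosed_of_closure_subset fun x hx => ?_
  have hxC : x ∈ C := closure_minimal (fun p hp => hp.1) hC hx
  -- `p ↦ dist (T x) p - dist x p` is continuous and nonpositive on the fixed points, so at `p = x`.
  have hle : closure {p ∈ C | T p = p} ⊆ {p | dist (T x) p ≤ dist x p} :=
    closure_minimal (fun p hp => hT p hp.1 hp.2 x hxC) (isClosed_le (by fun_prop) (by fun_prop))
  exact ⟨hxC, dist_le_zero.mp (by simpa using hle hx)⟩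

section StrictConvex

variable {E P : Type*} [NormedAddCommGroup E] [NormedSpace ℝ E] [StrictConvexSpace ℝ E]
  [MetricSpace P] [NormedAddTorsor E P]

theorem eq_lineMap_of_dist_le_of_dist_le {p q y : P} {t : ℝ} (ht : t ∈ Icc (0 : ℝ) 1)
    (hp : dist y p ≤ dist (lineMap p q t) p) (hq : dist y q ≤ dist (lineMap p q t) q) :
    y = lineMap p q t := by
  rw [dist_lineMap_left, Real.norm_of_nonneg ht.1] at hp
  rw [dist_lineMap_right, Real.norm_of_nonneg (sub_nonneg.mpr ht.2)] at hq
  have htri : dist p q ≤ dist y p + dist y q := dist_triangle_left p q y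
  apply eq_lineMap_of_dist_eq_mul_of_dist_eq_mul
  · rw [dist_comm]; linarith
  · linarith

end StrictConvex

theorem QuasiNonexpansiveOn.convex_fixedPoints {E : Type*} [NormedAddCommGroup E]
    [NormedSpace ℝ E] [StrictConvexSpace ℝ E] {T : E → E} {C : Set E}
    (hT : QuasiNonexpansiveOn T C) (hC : Convex ℝ C) : Convex ℝ {p ∈ C | T p = p} := by
  refine convex_iff_segment_subset.mpr fun p ⟨hpC, hp⟩ q ⟨hqC, hq⟩ => ?_
  rw [segment_eq_image_lineMap]
  rintro _ ⟨t, ht, rfl⟩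
  have hm : lineMap p q t ∈ C := hC.lineMap_mem hpC hqC ht
  exact ⟨hm, eq_lineMap_of_dist_le_of_dist_le ht (hT p hpC hp _ hm) (hT q hqC hq _ hm)⟩

theorem stmt8_general {B : Type*} [NormedAddCommGroup B] [NormedSpace ℝ B]
    [StrictConvexSpace ℝ B]
    (C : Set B) (hCcl : IsClosed C) (hCconv : Convex ℝ C)
    (T : B → B)
    (hfix : ∃ p ∈ C, T p = p)
    (hqne : ∀ p ∈ C, T p = p → ∀ x ∈ C, ‖T x - p‖ ≤ ‖x - p‖) :
    {p ∈ C | T p = p}.Nonempty ∧ IsClosed {p ∈ C | T p = p} ∧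
      Convex ℝ {p ∈ C | T p = p} := by
  have hT : QuasiNonexpansiveOn T C := by simpa only [QuasiNonexpansiveOn, dist_eq_norm]
  exact ⟨hfix, hT.isClosed_fixedPoints hCcl, hT.convex_fixedPoints hCconv⟩

/-- In a strictly convex Banach space, the fixed point set of a quasi-nonexpansive
self-map of a closed convex set is a nonempty closed convex set. -/
theorem stmt8 {B : Type*} [NormedAddCommGroup B] [NormedSpace ℝ B] [CompleteSpace B]
    [StrictConvexSpace ℝ B]
    (C : Set B) (hCcl : IsClosed C) (hCconv : Convex ℝ C)
    (T : B → B) (hT : Set.MapsTo T C C)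
    (hfix : ∃ p ∈ C, T p = p)
    (hqne : ∀ p ∈ C, T p = p → ∀ x ∈ C, ‖T x - p‖ ≤ ‖x - p‖) :
    {p ∈ C | T p = p}.Nonempty ∧ IsClosed {p ∈ C | T p = p} ∧
      Convex ℝ {p ∈ C | T p = p} :=
  stmt8_general C hCcl hCconv T hfix hqne
end

section
/- Let c > 0, a ∈ ℝ, and define h : ℝ → ℝ by h(x) = x - a - c/2 for x ≤ a and h(x) = x - a + c/2 for x > a. Then for every y with |y| < c/2, the map h̃_y(x) = x - (h(x) - y) is a self-map of the interval [a - c, a + c] with no fixed points; consequently h, though discontinuous at a, satisfies the weak property A at a with A = id. -/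
/-! On each side of `a` the map `x ↦ x - (h x - y)` is constant, equal to `a + c/2 + y` or
`a - c/2 + y`, and both values lie within `c` of `a`. A fixed point would need `h x = y`,
which is impossible because `|h x| ≥ c/2 > |y|`. Discontinuity: `h a = -c/2` while `h → c/2`
from the right. -/

open Filter Topology

theorem not_continuousAt_of_tendsto_nhdsWithin_ne {X Y : Type*} [TopologicalSpace X]
    [TopologicalSpace Y] [T2Space Y] {f : X → Y} {s : Set X} {a : X} [(𝓝[s] a).NeBot] {L : Y}
    (hf : Tendsto f (𝓝[s] a) (𝓝 L)) (hne : L ≠ f a) : ¬ContinuousAt f a := fun hcont =>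
  hne (tendsto_nhds_unique hf (hcont.tendsto.mono_left nhdsWithin_le_nhds))

noncomputable def jumpFn (a c : ℝ) (x : ℝ) : ℝ :=
  if x ≤ a then x - a - c / 2 else x - a + c / 2

namespace jumpFn

variable {a c : ℝ}

theorem apply_self : jumpFn a c a = -(c / 2) := by
  simp only [jumpFn, le_refl, if_true]; ring

theorem tendsto_nhdsGT : Tendsto (jumpFn a c) (𝓝[>] a) (𝓝 (c / 2)) := by
  have hlin : Tendsto (fun x : ℝ => x - a + c / 2) (𝓝[>] a) (𝓝 (c / 2)) := by
    have hcont : Continuous fun x : ℝ => x - a + c / 2 := by fun_prop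
    simpa using (hcont.tendsto a).mono_left nhdsWithin_le_nhds
  refine hlin.congr' ?_
  filter_upwards [self_mem_nhdsWithin] with x hx
  simp only [jumpFn, if_neg (not_le.mpr (Set.mem_Ioi.mp hx))]

theorem not_continuousAt (hc : 0 < c) : ¬ContinuousAt (jumpFn a c) a :=
  not_continuousAt_of_tendsto_nhdsWithin_ne tendsto_nhdsGT (by rw [apply_self]; linarith)

theorem sub_sub_eq (x y : ℝ) :
    x - (jumpFn a c x - y) = if x ≤ a then a + c / 2 + y else a - c / 2 + y := by
  unfold jumpFn; split_ifs <;> ring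

theorem sub_sub_mem_Icc {y : ℝ} (hy : |y| < c / 2) (x : ℝ) :
    x - (jumpFn a c x - y) ∈ Set.Icc (a - c) (a + c) := by
  rw [abs_lt] at hy
  rw [sub_sub_eq]
  split_ifs <;> constructor <;> linarith

theorem half_le_abs (x : ℝ) : c / 2 ≤ |jumpFn a c x| := by
  unfold jumpFn
  split_ifs with hx
  · exact le_abs.mpr (Or.inr (by linarith))
  · exact le_abs.mpr (Or.inl (by linarith [not_le.mp hx]))

theorem sub_sub_ne_self {y : ℝ} (hy : |y| < c / 2) (x : ℝ) : x - (jumpFn a c x - y) ≠ x := by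
  intro hfix
  have hxy : jumpFn a c x = y := by linarith
  exact (half_le_abs x).not_gt (hxy ▸ hy)

end jumpFn

/-- The discontinuous jump function `h` satisfies: `x ↦ x - (h x - y)` is a self-map of
`[a - c, a + c]` without fixed points, for every `|y| < c/2`. -/
theorem stmt15 (c : ℝ) (hc : 0 < c) (a : ℝ) (h : ℝ → ℝ)
    (hdef : ∀ x, h x = if x ≤ a then x - a - c / 2 else x - a + c / 2) :
    ¬ ContinuousAt h a ∧
    ∀ y : ℝ, |y| < c / 2 →
      Set.MapsTo (fun x => x - (h x - y)) (Set.Icc (a - c) (a + c)) (Set.Icc (a - c) (a + c)) ∧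
      ∀ x ∈ Set.Icc (a - c) (a + c), x - (h x - y) ≠ x := by
  obtain rfl : h = jumpFn a c := funext hdef
  exact ⟨jumpFn.not_continuousAt hc, fun y hy =>
    ⟨fun x _ => jumpFn.sub_sub_mem_Icc hy x, fun x _ => jumpFn.sub_sub_ne_self hy x⟩⟩
end

section
/- Let B be a uniformly convex Banach space (hence reflexive, hence every closed bounded convex set is weakly compact), C ⊆ B a nonempty closed bounded convex set, and T : C → C nonexpansive (‖T(x) - T(y)‖ ≤ ‖x - y‖). Then the set of fixed points of T is a nonempty closed convex subset of C. -/
/-!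
Approximate fixed points `u n` of `T`, with `‖T (u n) - u n‖ → 0`, come from the contractions
`x ↦ x₀ + k • (T x - x₀)`, `k < 1`. The asymptotic radius `ρ z = limsup ‖z - u n‖` is
1-Lipschitz, and uniform convexity forces points of `C` where `ρ` is nearly minimal to be close
to each other, so `ρ` attains its infimum over `C` at a unique point `p` (the asymptotic
centre). Nonexpansiveness gives `ρ (T p) ≤ ρ p`, hence `T p = p`. The fixed point set is convex
because in a strictly convex space a point at distances `b‖p - q‖` and `(1 - b)‖p - q‖` from `p`
and `q` must be the point of the segment `[p, q]` with parameter `b`.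
-/

open Filter Metric Set Topology
open scoped NNReal

theorem exists_forall_norm_le_norm_add_le_two_mul_sub {E : Type*} [SeminormedAddCommGroup E]
    [NormedSpace ℝ E] [UniformConvexSpace E] {ε : ℝ} (hε : 0 < ε) (R : ℝ) :
    ∃ δ > 0, ∀ r ≤ R, ∀ ⦃x y : E⦄, ‖x‖ ≤ r → ‖y‖ ≤ r → ε ≤ ‖x - y‖ → ‖x + y‖ ≤ 2 * r - δ := by
  have hR : 0 < max R ε := lt_max_of_lt_right hε
  obtain ⟨δ, hδ, h⟩ := exists_forall_closed_ball_dist_add_le_two_sub E (div_pos hε hR)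
  refine ⟨δ * ε / 2, by positivity, fun r hrR x y hx hy hxy => ?_⟩
  -- `δ` is uniform in `r ≤ R` because `ε ≤ ‖x - y‖` forces `ε / 2 ≤ r`.
  have hεr : ε ≤ 2 * r := hxy.trans ((norm_sub_le x y).trans (by linarith))
  have hr : 0 < r := by linarith
  have hr' : 0 ≤ r⁻¹ := inv_nonneg.2 hr.le
  have hunit : ∀ {v : E}, ‖v‖ ≤ r → ‖r⁻¹ • v‖ ≤ 1 := fun hv => by
    rw [norm_smul_of_nonneg hr', inv_mul_le_one₀ hr]; exact hv
  have hsep : ε / max R ε ≤ ‖r⁻¹ • x - r⁻¹ • y‖ := by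
    rw [← smul_sub, norm_smul_of_nonneg hr', inv_mul_eq_div]
    calc ε / max R ε ≤ ε / r := div_le_div_of_nonneg_left hε.le hr (hrR.trans (le_max_left _ _))
      _ ≤ ‖x - y‖ / r := div_le_div_of_nonneg_right hxy hr.le
  have hsum := h (hunit hx) (hunit hy) hsep
  rw [← smul_add, norm_smul_of_nonneg hr', inv_mul_le_iff₀ hr] at hsum
  nlinarith

theorem IsComplete.exists_apply_eq_of_isGLB {X : Type*} [PseudoMetricSpace X] {C : Set X}
    (hC : IsComplete C) {f : X → ℝ} (hf : Continuous f) {m : ℝ} (hm : IsGLB (f '' C) m)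
    (hwp : ∀ ε > 0, ∃ η > 0, ∀ z ∈ C, ∀ w ∈ C, f z < m + η → f w < m + η → dist z w < ε) :
    ∃ p ∈ C, f p = m := by
  have happrox : ∀ k : ℕ, ∃ z ∈ C, f z < m + 1 / (k + 1) := fun k => by
    obtain ⟨_, ⟨z, hz, rfl⟩, -, hlt⟩ :=
      hm.exists_between (lt_add_of_pos_right m k.one_div_pos_of_nat)
    exact ⟨z, hz, hlt⟩
  choose z hzC hzm using happrox
  have hfz : Tendsto (f ∘ z) atTop (𝓝 m) := by
    refine tendsto_of_tendsto_of_tendsto_of_le_of_le tendsto_const_nhds ?_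
      (fun k => hm.1 (mem_image_of_mem f (hzC k))) (fun k => (hzm k).le)
    simpa using tendsto_one_div_add_atTop_nhds_zero_nat.const_add m
  have hz : CauchySeq z := by
    refine Metric.cauchySeq_iff.2 fun ε hε => ?_
    obtain ⟨η, hη, hsmall⟩ := hwp ε hε
    obtain ⟨N, hN⟩ := eventually_atTop.1 (hfz.eventually (gt_mem_nhds (lt_add_of_pos_right m hη)))
    exact ⟨N, fun j hj k hk => hsmall _ (hzC j) _ (hzC k) (hN j hj) (hN k hk)⟩
  obtain ⟨p, hpC, hzp⟩ := cauchySeq_tendsto_of_isComplete hC hzC hz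
  exact ⟨p, hpC, tendsto_nhds_unique ((hf.tendsto p).comp hzp) hfz⟩

noncomputable def asymptoticRadius {X : Type*} [PseudoMetricSpace X] (u : ℕ → X) (z : X) : ℝ :=
  limsup (fun n => dist z (u n)) atTop

namespace asymptoticRadius

variable {X : Type*} [PseudoMetricSpace X] {u : ℕ → X}

theorem isBoundedUnder_dist (hu : Bornology.IsBounded (range u)) (z : X) :
    IsBoundedUnder (· ≤ ·) atTop (fun n => dist z (u n)) := by
  obtain ⟨R, hR⟩ := hu.subset_closedBall z
  exact isBoundedUnder_of ⟨R, fun n => by simpa [dist_comm] using hR (mem_range_self n)⟩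

theorem le_of_eventually_le {z : X} {a : ℝ} (h : ∀ᶠ n in atTop, dist z (u n) ≤ a) :
    asymptoticRadius u z ≤ a :=
  limsup_le_of_le (isCoboundedUnder_le_of_le atTop fun _ => dist_nonneg) h

theorem eventually_dist_lt (hu : Bornology.IsBounded (range u)) {z : X} {a : ℝ}
    (h : asymptoticRadius u z < a) : ∀ᶠ n in atTop, dist z (u n) < a :=
  eventually_lt_of_limsup_lt h (isBoundedUnder_dist hu z)

theorem nonneg (hu : Bornology.IsBounded (range u)) (z : X) : 0 ≤ asymptoticRadius u z :=
  le_limsup_of_frequently_le (Frequently.of_forall fun _ => dist_nonneg) (isBoundedUnder_dist hu z)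

theorem lipschitzWith (hu : Bornology.IsBounded (range u)) :
    LipschitzWith 1 (asymptoticRadius u) := by
  refine LipschitzWith.of_le_add fun z w => le_of_forall_gt_imp_ge_of_dense fun a ha => ?_
  refine le_of_eventually_le ?_
  filter_upwards [eventually_dist_lt hu (show asymptoticRadius u w < a - dist z w by linarith)]
    with n hn
  linarith [dist_triangle z w (u n)]

theorem le_of_lipschitzOnWith {C : Set X} {T : X → X} (hT : LipschitzOnWith 1 T C)
    (hu : Bornology.IsBounded (range u)) (huC : ∀ n, u n ∈ C)
    (hTu : Tendsto (fun n => dist (T (u n)) (u n)) atTop (𝓝 0)) {p : X} (hp : p ∈ C) :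
    asymptoticRadius u (T p) ≤ asymptoticRadius u p := by
  refine le_of_forall_gt_imp_ge_of_dense fun a ha => le_of_eventually_le ?_
  obtain ⟨b, hpb, hba⟩ := exists_between ha
  filter_upwards [eventually_dist_lt hu hpb, hTu.eventually (gt_mem_nhds (sub_pos.2 hba))]
    with n hpn hTn
  have := hT.dist_le_mul p hp (u n) (huC n)
  simp only [NNReal.coe_one, one_mul] at this
  linarith [dist_triangle (T p) (T (u n)) (u n)]

end asymptoticRadius

section NormedSpace

variable {E : Type*} [NormedAddCommGroup E] [NormedSpace ℝ E]

theorem asymptoticRadius.exists_pos_forall_dist_lt [UniformConvexSpace E] {u : ℕ → E}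
    (hu : Bornology.IsBounded (range u)) {C : Set E} (hC : Convex ℝ C) {m : ℝ}
    (hm : ∀ z ∈ C, m ≤ asymptoticRadius u z) {ε : ℝ} (hε : 0 < ε) :
    ∃ η > 0, ∀ z ∈ C, ∀ w ∈ C, asymptoticRadius u z < m + η → asymptoticRadius u w < m + η →
      dist z w < ε := by
  obtain ⟨δ, hδ, hunif⟩ := exists_forall_norm_le_norm_add_le_two_mul_sub (E := E) hε (m + 1)
  refine ⟨min 1 (δ / 4), lt_min one_pos (by positivity), fun z hz w hw hzr hwr => ?_⟩
  -- otherwise the midpoint of `z` and `w` would have asymptotic radius below `m`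
  by_contra! hzw
  set r := m + min 1 (δ / 4)
  have hmid : asymptoticRadius u ((2⁻¹ : ℝ) • z + (2⁻¹ : ℝ) • w) ≤ r - δ / 2 := by
    refine le_of_eventually_le ?_
    filter_upwards [eventually_dist_lt hu hzr, eventually_dist_lt hu hwr] with n hzn hwn
    rw [dist_eq_norm] at hzn hwn ⊢
    have hsum := hunif r (by simp [r]) hzn.le hwn.le
      (by rwa [sub_sub_sub_cancel_right, ← dist_eq_norm])
    calc ‖(2⁻¹ : ℝ) • z + (2⁻¹ : ℝ) • w - u n‖ = 2⁻¹ * ‖z - u n + (w - u n)‖ := by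
          rw [← norm_smul_of_nonneg (by norm_num)]; congr 1; module
      _ ≤ r - δ / 2 := by linarith
  have hhalf : (0 : ℝ) ≤ 2⁻¹ := by norm_num
  have := hm _ (hC hz hw hhalf hhalf (by norm_num))
  linarith [min_le_right 1 (δ / 4)]

theorem Convex.sep_apply_eq_self [StrictConvexSpace ℝ E] {C : Set E} (hC : Convex ℝ C)
    {T : E → E} (hT : LipschitzOnWith 1 T C) : Convex ℝ {p ∈ C | T p = p} := by
  rintro p ⟨hpC, hTp⟩ q ⟨hqC, hTq⟩ a b ha hb hab
  obtain rfl : a = 1 - b := by linarith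
  rw [← AffineMap.lineMap_apply_module]
  set w := AffineMap.lineMap p q b
  have hwC : w ∈ C := hC.lineMap_mem hpC hqC ⟨hb, sub_nonneg.1 ha⟩
  have hpw : dist p (T w) ≤ b * dist p q :=
    calc dist p (T w) = dist (T p) (T w) := by rw [hTp]
      _ ≤ dist p w := by simpa using hT.dist_le_mul p hpC w hwC
      _ = b * dist p q := by rw [dist_left_lineMap, Real.norm_of_nonneg hb]
  have hwq : dist (T w) q ≤ (1 - b) * dist p q :=
    calc dist (T w) q = dist (T w) (T q) := by rw [hTq]
      _ ≤ dist w q := by simpa using hT.dist_le_mul w hwC q hqC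
      _ = (1 - b) * dist p q := by rw [dist_lineMap_right, Real.norm_of_nonneg ha]
  have htri := dist_triangle p (T w) q
  exact ⟨hwC, eq_lineMap_of_dist_eq_mul_of_dist_eq_mul (by linarith) (by linarith)⟩

theorem exists_dist_apply_self_le {C : Set E} (hCne : C.Nonempty) (hCcl : IsComplete C)
    (hCbd : Bornology.IsBounded C) (hCconv : Convex ℝ C) {T : E → E} (hTC : MapsTo T C C)
    (hT : LipschitzOnWith 1 T C) {ε : ℝ} (hε : 0 < ε) : ∃ c ∈ C, dist (T c) c ≤ ε := by
  obtain ⟨x₀, hx₀⟩ := hCne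
  have hD : 0 ≤ diam C := diam_nonneg
  set k : ℝ≥0 := ⟨diam C / (diam C + ε), by positivity⟩
  have hk : k < 1 := by
    rw [← NNReal.coe_lt_coe]
    exact (div_lt_one (by positivity)).2 (by linarith)
  set S : E → E := fun x => x₀ + (k : ℝ) • (T x - x₀)
  have hS : MapsTo S C C := fun x hx =>
    hCconv.add_smul_sub_mem hx₀ (hTC hx) ⟨k.coe_nonneg, hk.le⟩
  have hSk : LipschitzOnWith k S C := LipschitzOnWith.of_dist_le_mul fun x hx y hy => by
    rw [dist_eq_norm, dist_eq_norm, add_sub_add_left_eq_sub, ← smul_sub, sub_sub_sub_cancel_right,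
      norm_smul, Real.norm_of_nonneg k.coe_nonneg, ← dist_eq_norm, ← dist_eq_norm]
    simpa using mul_le_mul_of_nonneg_left (hT.dist_le_mul x hx y hy) k.coe_nonneg
  obtain ⟨c, hcC, hSc, -⟩ :=
    ContractingWith.exists_fixedPoint' hCcl hS ⟨hk, hSk.mapsToRestrict hS⟩ hx₀ (edist_ne_top _ _)
  refine ⟨c, hcC, ?_⟩
  have hk' : 1 - (k : ℝ) = ε / (diam C + ε) := by
    rw [show (k : ℝ) = diam C / (diam C + ε) from rfl]
    field_simp
    ring
  have hTc : T c - c = (ε / (diam C + ε)) • (T c - x₀) := by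
    nth_rewrite 2 [← hSc]
    simp only [S]
    rw [← hk']
    module
  calc dist (T c) c = ε / (diam C + ε) * dist (T c) x₀ := by
        rw [dist_eq_norm, hTc, norm_smul, Real.norm_of_nonneg (by positivity), dist_eq_norm]
    _ ≤ ε / (diam C + ε) * diam C := by
        gcongr
        exact dist_le_diam_of_mem hCbd (hTC hcC) hx₀
    _ ≤ ε := by
        rw [div_mul_eq_mul_div, div_le_iff₀ (by positivity)]
        nlinarith

theorem exists_seq_tendsto_dist_apply_self {C : Set E} (hCne : C.Nonempty) (hCcl : IsComplete C)
    (hCbd : Bornology.IsBounded C) (hCconv : Convex ℝ C) {T : E → E} (hTC : MapsTo T C C)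
    (hT : LipschitzOnWith 1 T C) :
    ∃ u : ℕ → E, (∀ n, u n ∈ C) ∧ Tendsto (fun n => dist (T (u n)) (u n)) atTop (𝓝 0) := by
  choose u huC hTu using fun n : ℕ =>
    exists_dist_apply_self_le hCne hCcl hCbd hCconv hTC hT n.one_div_pos_of_nat
  exact ⟨u, huC, squeeze_zero (fun _ => dist_nonneg) hTu tendsto_one_div_add_atTop_nhds_zero_nat⟩

theorem exists_mem_apply_eq_self_of_lipschitzOnWith_one [UniformConvexSpace E] {C : Set E}
    (hCne : C.Nonempty) (hCcl : IsComplete C) (hCbd : Bornology.IsBounded C)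
    (hCconv : Convex ℝ C) {T : E → E} (hTC : MapsTo T C C) (hT : LipschitzOnWith 1 T C) :
    ∃ p ∈ C, T p = p := by
  obtain ⟨u, huC, hTu⟩ := exists_seq_tendsto_dist_apply_self hCne hCcl hCbd hCconv hTC hT
  have hu : Bornology.IsBounded (range u) := hCbd.subset (range_subset_iff.2 huC)
  set m := sInf (asymptoticRadius u '' C)
  have hm : IsGLB (asymptoticRadius u '' C) m := Real.isGLB_sInf (hCne.image _)
    ⟨0, forall_mem_image.2 fun z _ => asymptoticRadius.nonneg hu z⟩
  have hsmall := fun ε (hε : 0 < ε) => asymptoticRadius.exists_pos_forall_dist_lt hu hCconv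
    (fun z hz => hm.1 (mem_image_of_mem _ hz)) hε
  obtain ⟨p, hpC, hpm⟩ :=
    hCcl.exists_apply_eq_of_isGLB (asymptoticRadius.lipschitzWith hu).continuous hm hsmall
  have hTp : asymptoticRadius u (T p) ≤ m :=
    hpm ▸ asymptoticRadius.le_of_lipschitzOnWith hT hu huC hTu hpC
  refine ⟨p, hpC, eq_of_forall_dist_le fun ε hε => ?_⟩
  obtain ⟨η, hη, hclose⟩ := hsmall ε hε
  exact (hclose _ (hTC hpC) _ hpC (by linarith) (by linarith)).le
end NormedSpace

/-- Browder–Göhde–Kirk: in a uniformly convex Banach space, a nonexpansive self-map of a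
nonempty closed bounded convex set has a nonempty closed convex fixed point set. -/
theorem stmt19 {B : Type*} [NormedAddCommGroup B] [NormedSpace ℝ B] [CompleteSpace B]
    [UniformConvexSpace B]
    (C : Set B) (hCne : C.Nonempty) (hCcl : IsClosed C) (hCbd : Bornology.IsBounded C)
    (hCconv : Convex ℝ C)
    (T : B → B) (hT : Set.MapsTo T C C)
    (hne : ∀ x ∈ C, ∀ y ∈ C, ‖T x - T y‖ ≤ ‖x - y‖) :
    {p ∈ C | T p = p}.Nonempty ∧ IsClosed {p ∈ C | T p = p} ∧
      Convex ℝ {p ∈ C | T p = p} := by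
  have hLip : LipschitzOnWith 1 T C := LipschitzOnWith.of_dist_le_mul fun x hx y hy => by
    simpa [dist_eq_norm] using hne x hx y hy
  exact ⟨exists_mem_apply_eq_self_of_lipschitzOnWith_one hCne hCcl.isComplete hCbd hCconv hT hLip,
    hCcl.isClosed_eq hLip.continuousOn continuousOn_id, hCconv.sep_apply_eq_self hLip⟩
end
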